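/- For the rank of the matrix multiplication tensor, R⟨d1, d2, d3⟩ = R⟨d2, d3, d1⟩. -/
import Mathlib


/-- The bilinear (tensor) rank of the matrix multiplication tensor
`⟨d1, d2, d3⟩` over `ℝ`: the least `r` for which there is a bilinear algorithm
with `r` multiplications computing the product of a `d1 × d2` matrix with a
`d2 × d3` matrix. -/
lemma mm_cyc (d1 d2 d3 r : ℕ)
    (h : ∃ (u : Fin r → Matrix (Fin d1) (Fin d2) ℝ)
      (v : Fin r → Matrix (Fin d2) (Fin d3) ℝ)
      (w : Fin r → Matrix (Fin d1) (Fin d3) ℝ),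
      ∀ (A : Matrix (Fin d1) (Fin d2) ℝ) (B : Matrix (Fin d2) (Fin d3) ℝ)
        (i : Fin d1) (k : Fin d3),
        (A * B) i k =
          ∑ t : Fin r,
            (∑ i' : Fin d1, ∑ j' : Fin d2, u t i' j' * A i' j') *
              (∑ j' : Fin d2, ∑ k' : Fin d3, v t j' k' * B j' k') * w t i k) :
    ∃ (u : Fin r → Matrix (Fin d2) (Fin d3) ℝ)
      (v : Fin r → Matrix (Fin d3) (Fin d1) ℝ)
      (w : Fin r → Matrix (Fin d2) (Fin d1) ℝ),
      ∀ (A : Matrix (Fin d2) (Fin d3) ℝ) (B : Matrix (Fin d3) (Fin d1) ℝ)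
        (i : Fin d2) (k : Fin d1),
        (A * B) i k =
          ∑ t : Fin r,
            (∑ i' : Fin d2, ∑ j' : Fin d3, u t i' j' * A i' j') *
              (∑ j' : Fin d3, ∑ k' : Fin d1, v t j' k' * B j' k') * w t i k := by
  obtain ⟨u, v, w, H⟩ := h
  refine ⟨v, fun t => (w t).transpose, fun t => (u t).transpose, ?_⟩
  intro A B i k
  -- trilinear identity specialized at X = stdBasisMatrix k i 1
  set X : Matrix (Fin d1) (Fin d2) ℝ := Matrix.single k i 1 with hX
  have hUX : ∀ t, (∑ i' : Fin d1, ∑ j' : Fin d2, u t i' j' * X i' j') = u t k i := by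
    intro t
    simp [hX, Matrix.single, Matrix.of_apply, ite_and, mul_ite,
      Finset.sum_ite_eq, Finset.sum_ite_eq']
  have hXA : ∀ (i₀ : Fin d1) (k₀ : Fin d3), (X * A) i₀ k₀ = if k = i₀ then A i k₀ else 0 := by
    intro i₀ k₀
    simp [hX, Matrix.mul_apply, Matrix.single, Matrix.of_apply, ite_and,
      Finset.sum_ite_eq, Finset.sum_ite_eq']
  -- sum the identity H X A against B
  have key : ∑ i₀ : Fin d1, ∑ k₀ : Fin d3, (X * A) i₀ k₀ * B k₀ i₀
      = ∑ t : Fin r,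
          u t k i * (∑ j' : Fin d2, ∑ k' : Fin d3, v t j' k' * A j' k') *
            (∑ i₀ : Fin d1, ∑ k₀ : Fin d3, w t i₀ k₀ * B k₀ i₀) := by
    calc ∑ i₀ : Fin d1, ∑ k₀ : Fin d3, (X * A) i₀ k₀ * B k₀ i₀
        = ∑ i₀ : Fin d1, ∑ k₀ : Fin d3, (∑ t : Fin r,
            (∑ i' : Fin d1, ∑ j' : Fin d2, u t i' j' * X i' j') *
              (∑ j' : Fin d2, ∑ k' : Fin d3, v t j' k' * A j' k') * w t i₀ k₀) * B k₀ i₀ := by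
          refine Finset.sum_congr rfl fun i₀ _ => Finset.sum_congr rfl fun k₀ _ => ?_
          rw [H X A i₀ k₀]
      _ = ∑ t : Fin r,
          u t k i * (∑ j' : Fin d2, ∑ k' : Fin d3, v t j' k' * A j' k') *
            (∑ i₀ : Fin d1, ∑ k₀ : Fin d3, w t i₀ k₀ * B k₀ i₀) := by
          have swap3 : ∀ (f : Fin d1 → Fin d3 → Fin r → ℝ),
              ∑ i₀ : Fin d1, ∑ k₀ : Fin d3, ∑ t : Fin r, f i₀ k₀ t
                = ∑ t : Fin r, ∑ i₀ : Fin d1, ∑ k₀ : Fin d3, f i₀ k₀ t := by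
            intro f
            calc ∑ i₀ : Fin d1, ∑ k₀ : Fin d3, ∑ t : Fin r, f i₀ k₀ t
                = ∑ i₀ : Fin d1, ∑ t : Fin r, ∑ k₀ : Fin d3, f i₀ k₀ t :=
                  Finset.sum_congr rfl fun _ _ => Finset.sum_comm
              _ = ∑ t : Fin r, ∑ i₀ : Fin d1, ∑ k₀ : Fin d3, f i₀ k₀ t := Finset.sum_comm
          simp only [hUX, Finset.sum_mul]
          rw [swap3]
          refine Finset.sum_congr rfl fun t _ => ?_
          simp only [Finset.mul_sum]
          refine Finset.sum_congr rfl fun i₀ _ => Finset.sum_congr rfl fun k₀ _ => ?_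
          ring
  have lhs_eq : ∑ i₀ : Fin d1, ∑ k₀ : Fin d3, (X * A) i₀ k₀ * B k₀ i₀ = (A * B) i k := by
    simp only [hXA]
    simp [Matrix.mul_apply, ite_mul, Finset.sum_ite_eq, Finset.sum_ite_eq']
  rw [← lhs_eq, key]
  refine Finset.sum_congr rfl fun t _ => ?_
  simp only [Matrix.transpose_apply]
  rw [Finset.sum_comm (γ := Fin d3)]
  ring

noncomputable def mmRank (d1 d2 d3 : ℕ) : ℕ :=
  sInf {r : ℕ |
    ∃ (u : Fin r → Matrix (Fin d1) (Fin d2) ℝ)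
      (v : Fin r → Matrix (Fin d2) (Fin d3) ℝ)
      (w : Fin r → Matrix (Fin d1) (Fin d3) ℝ),
      ∀ (A : Matrix (Fin d1) (Fin d2) ℝ) (B : Matrix (Fin d2) (Fin d3) ℝ)
        (i : Fin d1) (k : Fin d3),
        (A * B) i k =
          ∑ t : Fin r,
            (∑ i' : Fin d1, ∑ j' : Fin d2, u t i' j' * A i' j') *
              (∑ j' : Fin d2, ∑ k' : Fin d3, v t j' k' * B j' k') * w t i k}

/-- The rank of the matrix multiplication tensor is invariant
under cyclic permutation of the three dimensions: `R⟨d1,d2,d3⟩ = R⟨d2,d3,d1⟩`. -/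
theorem stmt13 (d1 d2 d3 : ℕ) : mmRank d1 d2 d3 = mmRank d2 d3 d1 := by
  unfold mmRank
  congr 1
  ext r
  simp only [Set.mem_setOf_eq]
  constructor
  · exact mm_cyc d1 d2 d3 r
  · intro h
    exact mm_cyc _ _ _ _ (mm_cyc _ _ _ _ h)
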